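/- (Relation between the modified and the standard Jarzynski equalities.) Σ_i (exp(−β ε_i)/Z_S0)·exp(−β W̃(i)) = (Σ_{i,j,k,l} P(i,j,k,l)·exp(−β W(i,j,k,l)))·exp(−D). -/

import Mathlib

open Matrix Kronecker BigOperators Finset

set_option maxHeartbeats 1000000

noncomputable section

/-- Partial trace over the bath (second tensor factor). -/
def ptraceB {n m : ℕ} (X : Matrix (Fin n × Fin m) (Fin n × Fin m) ℂ) :
    Matrix (Fin n) (Fin n) ℂ :=
  Matrix.of fun i i' => ∑ j, X (i, j) (i', j)

/-- Outer product `|v⟩⟨v|`. -/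
def outer {k : ℕ} (v : Fin k → ℂ) : Matrix (Fin k) (Fin k) ℂ :=
  Matrix.vecMulVec v (star v)

/-- Partition function `Z = Tr exp (−β H)` (real part of the trace). -/
def Zpart (β : ℝ) {k : ℕ} (H : Matrix (Fin k) (Fin k) ℂ) : ℝ :=
  (NormedSpace.exp ((-β) • H)).trace.re

/-- Gibbs state `exp (−β H) / Z`. -/
def gibbs (β : ℝ) {k : ℕ} (H : Matrix (Fin k) (Fin k) ℂ) : Matrix (Fin k) (Fin k) ℂ :=
  ((Zpart β H : ℂ)⁻¹) • NormedSpace.exp ((-β) • H)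

/-- The channel `Φ(ρ) = Tr_B [U (ρ ⊗ τB) U†]`. -/
def channel {n m : ℕ} (U : Matrix (Fin n × Fin m) (Fin n × Fin m) ℂ)
    (τB : Matrix (Fin m) (Fin m) ℂ) (ρ : Matrix (Fin n) (Fin n) ℂ) :
    Matrix (Fin n) (Fin n) ℂ :=
  ptraceB (U * (ρ ⊗ₖ τB) * Uᴴ)


section auxlemmas

variable {ι : Type*} [Fintype ι] [DecidableEq ι]

private lemma row_onb_mul (v : ι → ι → ℂ)
    (h : ∀ a b, ∑ x, (starRingEnd ℂ) (v a x) * v b x = if a = b then 1 else 0) :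
    Matrix.of v * (Matrix.of v)ᴴ = 1 := by
  ext a b
  have h1 := congrArg star (h a b)
  simp only [star_sum, star_mul', starRingEnd_apply, star_star] at h1
  simp only [Matrix.mul_apply, Matrix.conjTranspose_apply, Matrix.of_apply, Matrix.one_apply,
    starRingEnd_apply]
  rw [h1]
  split <;> simp

private lemma onb_complete (v : ι → ι → ℂ)
    (h : ∀ a b, ∑ x, (starRingEnd ℂ) (v a x) * v b x = if a = b then 1 else 0) :
    ∀ x y, ∑ a, v a x * (starRingEnd ℂ) (v a y) = if x = y then 1 else 0 := by
  have h2 : (Matrix.of v)ᴴ * Matrix.of v = 1 := mul_eq_one_comm.mp (row_onb_mul v h)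
  intro x y
  have h0 := congrFun (congrFun h2 x) y
  simp only [Matrix.mul_apply, Matrix.conjTranspose_apply, Matrix.of_apply, Matrix.one_apply,
    starRingEnd_apply] at h0 ⊢
  have h3 := congrArg star h0
  simp only [star_sum, star_mul', star_star] at h3
  rw [h3]
  split <;> simp

private lemma mulVec_inner (U : Matrix ι ι ℂ) (hU : Uᴴ * U = 1) (u w : ι → ℂ) :
    ∑ x, (starRingEnd ℂ) ((U *ᵥ u) x) * ((U *ᵥ w) x)
      = ∑ x, (starRingEnd ℂ) (u x) * w x := by
  have h1 : star (U *ᵥ u) ⬝ᵥ (U *ᵥ w) = star u ⬝ᵥ w := by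
    rw [Matrix.star_mulVec, Matrix.dotProduct_mulVec, Matrix.vecMul_vecMul, hU,
      Matrix.vecMul_one]
  simpa only [dotProduct, Pi.star_apply, starRingEnd_apply] using h1

private lemma sum_abs_sq_eq_one {κ : Type*} [Fintype κ]
    (g : κ → ι → ℂ) (w : ι → ℂ)
    (hg : ∀ x y, ∑ a, g a x * (starRingEnd ℂ) (g a y) = if x = y then 1 else 0)
    (hw : ∑ x, (starRingEnd ℂ) (w x) * w x = 1) :
    ∑ a, (‖∑ x, (starRingEnd ℂ) (w x) * g a x‖)^2 = 1 := by
  have hC : (∑ a, (∑ x, (starRingEnd ℂ) (w x) * g a x)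
      * (starRingEnd ℂ) (∑ y, (starRingEnd ℂ) (w y) * g a y)) = 1 := by
    have step1 : ∀ a : κ, (∑ x, (starRingEnd ℂ) (w x) * g a x)
        * (starRingEnd ℂ) (∑ y, (starRingEnd ℂ) (w y) * g a y)
        = ∑ x, ∑ y, ((starRingEnd ℂ) (w x) * w y) * (g a x * (starRingEnd ℂ) (g a y)) := by
      intro a
      rw [map_sum, Finset.sum_mul_sum]
      refine Finset.sum_congr rfl fun x _ => Finset.sum_congr rfl fun y _ => ?_
      simp only [_root_.map_mul, Complex.conj_conj]
      ring
    calc (∑ a, (∑ x, (starRingEnd ℂ) (w x) * g a x)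
          * (starRingEnd ℂ) (∑ y, (starRingEnd ℂ) (w y) * g a y))
        = ∑ a, ∑ x, ∑ y, ((starRingEnd ℂ) (w x) * w y) * (g a x * (starRingEnd ℂ) (g a y)) :=
          Finset.sum_congr rfl fun a _ => step1 a
      _ = ∑ x, ∑ y, ∑ a, ((starRingEnd ℂ) (w x) * w y) * (g a x * (starRingEnd ℂ) (g a y)) := by
          rw [Finset.sum_comm]
          exact Finset.sum_congr rfl fun x _ => Finset.sum_comm
      _ = ∑ x, ∑ y, ((starRingEnd ℂ) (w x) * w y) * (if x = y then 1 else 0) := by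
          refine Finset.sum_congr rfl fun x _ => Finset.sum_congr rfl fun y _ => ?_
          rw [← Finset.mul_sum, hg x y]
      _ = ∑ x, (starRingEnd ℂ) (w x) * w x := by
          refine Finset.sum_congr rfl fun x _ => ?_
          rw [Finset.sum_eq_single x]
          · simp
          · intro b _ hb; rw [if_neg (Ne.symm hb), mul_zero]
          · simp
      _ = 1 := hw
  have habs : ∀ a : κ, (‖∑ x, (starRingEnd ℂ) (w x) * g a x‖)^2
      = ((∑ x, (starRingEnd ℂ) (w x) * g a x)
        * (starRingEnd ℂ) (∑ y, (starRingEnd ℂ) (w y) * g a y)).re := by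
    intro a
    rw [Complex.mul_conj, ← Complex.sq_norm]
    rw [Complex.ofReal_re]
  rw [Finset.sum_congr rfl fun a _ => habs a, ← Complex.re_sum, hC, Complex.one_re]

end auxlemmas

section spec

variable {k : ℕ}

private lemma eig_decomp (β : ℝ) (H : Matrix (Fin k) (Fin k) ℂ)
    (v : Fin k → Fin k → ℂ) (d : Fin k → ℝ)
    (h : ∀ a b, ∑ x, (starRingEnd ℂ) (v a x) * v b x = if a = b then 1 else 0)
    (heig : ∀ a, H *ᵥ v a = (d a : ℂ) • v a) :
    ∃ N Ninv : Matrix (Fin k) (Fin k) ℂ, N * Ninv = 1 ∧ Ninv * N = 1 ∧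
      NormedSpace.exp ((-β) • H)
        = N * Matrix.diagonal (fun a => (Real.exp (-(β * d a)) : ℂ)) * Ninv ∧
      H = N * Matrix.diagonal (fun a => ((d a : ℝ) : ℂ)) * Ninv := by
  set M := Matrix.of v with hM
  have hMM : M * Mᴴ = 1 := row_onb_mul v h
  have hMM' : Mᴴ * M = 1 := mul_eq_one_comm.mp hMM
  have hN1 : Mᵀ * (Mᴴ)ᵀ = 1 := by rw [← Matrix.transpose_mul, hMM', Matrix.transpose_one]
  have hN2 : (Mᴴ)ᵀ * Mᵀ = 1 := by rw [← Matrix.transpose_mul, hMM, Matrix.transpose_one]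
  have hHN : H * Mᵀ = Mᵀ * Matrix.diagonal (fun a => ((d a : ℝ) : ℂ)) := by
    ext x a
    have h0 := congrFun (heig a) x
    simp only [Matrix.mulVec, dotProduct, Pi.smul_apply, smul_eq_mul] at h0
    simp only [Matrix.mul_apply, Matrix.transpose_apply, Matrix.of_apply, hM]
    rw [show (∑ y, H x y * v a y) = (d a : ℂ) * v a x from by
      rw [← h0]]
    rw [Finset.sum_eq_single a]
    · rw [Matrix.diagonal_apply_eq, mul_comm]
    · intro b _ hb; rw [Matrix.diagonal_apply_ne _ hb, mul_zero]
    · simp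
  have hH : H = Mᵀ * Matrix.diagonal (fun a => ((d a : ℝ) : ℂ)) * (Mᴴ)ᵀ := by
    calc H = H * (Mᵀ * (Mᴴ)ᵀ) := by rw [hN1, Matrix.mul_one]
      _ = (H * Mᵀ) * (Mᴴ)ᵀ := by rw [Matrix.mul_assoc]
      _ = _ := by rw [hHN]
  have hUnit : IsUnit (Mᵀ) := ⟨⟨Mᵀ, (Mᴴ)ᵀ, hN1, hN2⟩, rfl⟩
  have hInv : (Mᵀ)⁻¹ = (Mᴴ)ᵀ := Matrix.inv_eq_right_inv hN1
  have hdiag : (-β : ℝ) • (Matrix.diagonal (fun a => ((d a : ℝ) : ℂ)))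
      = Matrix.diagonal (fun a => ((-(β * d a) : ℝ) : ℂ)) := by
    rw [← Matrix.diagonal_smul]
    refine congrArg Matrix.diagonal ?_
    funext a
    simp only [Pi.smul_apply, Complex.real_smul]
    push_cast
    ring
  have hsm : (-β) • H = Mᵀ * Matrix.diagonal (fun a => ((-(β * d a) : ℝ) : ℂ)) * (Mᴴ)ᵀ := by
    rw [hH, ← Matrix.smul_mul, ← hdiag, Matrix.mul_smul]
  have hexp : NormedSpace.exp ((-β) • H)
      = Mᵀ * Matrix.diagonal (fun a => (Real.exp (-(β * d a)) : ℂ)) * (Mᴴ)ᵀ := by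
    have hfun : NormedSpace.exp (fun a : Fin k => ((-(β * d a) : ℝ) : ℂ))
        = fun a : Fin k => (Real.exp (-(β * d a)) : ℂ) := by
      rw [Pi.exp_def]
      funext a
      rw [← Complex.exp_eq_exp_ℂ, ← Complex.ofReal_exp]
    rw [hsm, ← hInv, Matrix.exp_conj _ _ hUnit, Matrix.exp_diagonal, hfun, hInv]
  exact ⟨Mᵀ, (Mᴴ)ᵀ, hN1, hN2, hexp, hH⟩

private lemma Zpart_eq (β : ℝ) (H : Matrix (Fin k) (Fin k) ℂ)
    (v : Fin k → Fin k → ℂ) (d : Fin k → ℝ)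
    (h : ∀ a b, ∑ x, (starRingEnd ℂ) (v a x) * v b x = if a = b then 1 else 0)
    (heig : ∀ a, H *ᵥ v a = (d a : ℂ) • v a) :
    Zpart β H = ∑ a, Real.exp (-(β * d a)) := by
  obtain ⟨N, Ninv, h1, h2, hexp, hH⟩ := eig_decomp β H v d h heig
  unfold Zpart
  rw [hexp, Matrix.trace_mul_cycle, h2, Matrix.one_mul, Matrix.trace_diagonal]
  rw [Complex.re_sum]
  exact Finset.sum_congr rfl fun a _ => Complex.ofReal_re _

private lemma trace_H_exp (β : ℝ) (H : Matrix (Fin k) (Fin k) ℂ)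
    (v : Fin k → Fin k → ℂ) (d : Fin k → ℝ)
    (h : ∀ a b, ∑ x, (starRingEnd ℂ) (v a x) * v b x = if a = b then 1 else 0)
    (heig : ∀ a, H *ᵥ v a = (d a : ℂ) • v a) :
    ((H * NormedSpace.exp ((-β) • H)).trace).re
      = ∑ a, d a * Real.exp (-(β * d a)) := by
  obtain ⟨N, Ninv, h1, h2, hexp, hH⟩ := eig_decomp β H v d h heig
  have key : H * NormedSpace.exp ((-β) • H)
      = N * Matrix.diagonal (fun a => ((d a : ℝ) : ℂ) * (Real.exp (-(β * d a)) : ℂ)) * Ninv := by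
    rw [hexp, hH, ← Matrix.diagonal_mul_diagonal]
    calc N * Matrix.diagonal (fun a => ((d a : ℝ) : ℂ)) * Ninv
          * (N * Matrix.diagonal (fun a => (Real.exp (-(β * d a)) : ℂ)) * Ninv)
        = N * Matrix.diagonal (fun a => ((d a : ℝ) : ℂ)) * ((Ninv * N)
          * (Matrix.diagonal (fun a => (Real.exp (-(β * d a)) : ℂ)) * Ninv)) := by
          simp only [Matrix.mul_assoc]
      _ = _ := by rw [h2, Matrix.one_mul]; simp only [Matrix.mul_assoc]
  rw [key, Matrix.trace_mul_cycle, h2, Matrix.one_mul,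
    Matrix.trace_diagonal, Complex.re_sum]
  refine Finset.sum_congr rfl fun a _ => ?_
  rw [← Complex.ofReal_mul, Complex.ofReal_re]

end spec

private lemma trace_kron_one {n m : ℕ} (A : Matrix (Fin n) (Fin n) ℂ)
    (X : Matrix (Fin n × Fin m) (Fin n × Fin m) ℂ) :
    ((A ⊗ₖ (1 : Matrix (Fin m) (Fin m) ℂ)) * X).trace = (A * ptraceB X).trace := by
  simp only [Matrix.trace, Matrix.diag, Matrix.mul_apply, ptraceB, Matrix.of_apply,
    Matrix.kroneckerMap_apply, Matrix.one_apply, Fintype.sum_prod_type, ite_mul, one_mul,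
    zero_mul, mul_ite, mul_zero, Finset.mul_sum]
  refine Finset.sum_congr rfl fun i _ => ?_
  rw [Finset.sum_comm]
  refine Finset.sum_congr rfl fun i' _ => ?_
  refine Finset.sum_congr rfl fun j _ => ?_
  rw [Finset.sum_eq_single j]
  · simp
  · intro b _ hb; rw [if_neg (Ne.symm hb)]
  · simp

private lemma prod_onb {n m : ℕ} (e : Fin n → Fin n → ℂ) (f : Fin m → Fin m → ℂ)
    (he : ∀ i i', ∑ x, (starRingEnd ℂ) (e i x) * e i' x = if i = i' then 1 else 0)
    (hf : ∀ j j', ∑ x, (starRingEnd ℂ) (f j x) * f j' x = if j = j' then 1 else 0) :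
    ∀ a b : Fin n × Fin m,
      ∑ y : Fin n × Fin m, (starRingEnd ℂ) (e a.1 y.1 * f a.2 y.2) * (e b.1 y.1 * f b.2 y.2)
        = if a = b then 1 else 0 := by
  intro a b
  rw [Fintype.sum_prod_type]
  calc (∑ y1, ∑ y2, (starRingEnd ℂ) (e a.1 y1 * f a.2 y2) * (e b.1 y1 * f b.2 y2))
      = ∑ y1, ∑ y2, ((starRingEnd ℂ) (e a.1 y1) * e b.1 y1)
          * ((starRingEnd ℂ) (f a.2 y2) * f b.2 y2) := by
        refine Finset.sum_congr rfl fun y1 _ => Finset.sum_congr rfl fun y2 _ => ?_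
        simp only [_root_.map_mul]
        ring
    _ = (∑ y1, (starRingEnd ℂ) (e a.1 y1) * e b.1 y1)
          * (∑ y2, (starRingEnd ℂ) (f a.2 y2) * f b.2 y2) := by
        rw [Finset.sum_mul_sum]
    _ = (if a.1 = b.1 then 1 else 0) * (if a.2 = b.2 then 1 else 0) := by rw [he, hf]
    _ = if a = b then 1 else 0 := by
        by_cases h1 : a.1 = b.1 <;> by_cases h2 : a.2 = b.2 <;>
          simp [Prod.ext_iff, h1, h2]

private lemma sum4_comm {A B C D M : Type*} [Fintype A] [Fintype B] [Fintype C] [Fintype D]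
    [AddCommMonoid M] (F : A → B → C → D → M) :
    ∑ i, ∑ j, ∑ k, ∑ l, F i j k l = ∑ k, ∑ l, ∑ i, ∑ j, F i j k l := by
  calc ∑ i, ∑ j, ∑ k, ∑ l, F i j k l
      = ∑ i, ∑ k, ∑ j, ∑ l, F i j k l :=
        Finset.sum_congr rfl fun i _ => Finset.sum_comm
    _ = ∑ k, ∑ i, ∑ j, ∑ l, F i j k l := Finset.sum_comm
    _ = ∑ k, ∑ i, ∑ l, ∑ j, F i j k l :=
        Finset.sum_congr rfl fun k _ => Finset.sum_congr rfl fun i _ => Finset.sum_comm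
    _ = ∑ k, ∑ l, ∑ i, ∑ j, F i j k l :=
        Finset.sum_congr rfl fun k _ => Finset.sum_comm

theorem modified_vs_standard_jarzynski
    (n m : ℕ) (hn : 1 ≤ n) (hm : 1 ≤ m)
    (β : ℝ) (hβ : 0 < β)
    (HS0 HSt : Matrix (Fin n) (Fin n) ℂ)
    (hHS0 : HS0.IsHermitian) (hHSt : HSt.IsHermitian)
    (HB : Matrix (Fin m) (Fin m) ℂ) (hHB : HB.IsHermitian)
    (e : Fin n → Fin n → ℂ) (ε : Fin n → ℝ)
    (he : ∀ i i', ∑ x, (starRingEnd ℂ) (e i x) * e i' x = if i = i' then 1 else 0)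
    (heig : ∀ i, HS0 *ᵥ e i = (ε i : ℂ) • e i)
    (e' : Fin n → Fin n → ℂ) (ε' : Fin n → ℝ)
    (he' : ∀ k k', ∑ x, (starRingEnd ℂ) (e' k x) * e' k' x = if k = k' then 1 else 0)
    (heig' : ∀ k, HSt *ᵥ e' k = (ε' k : ℂ) • e' k)
    (f : Fin m → Fin m → ℂ) (q : Fin m → ℝ)
    (hf : ∀ j j', ∑ x, (starRingEnd ℂ) (f j x) * f j' x = if j = j' then 1 else 0)
    (hfeig : ∀ j, HB *ᵥ f j = (q j : ℂ) • f j)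
    (U : Matrix (Fin n × Fin m) (Fin n × Fin m) ℂ)
    (hU : U ∈ Matrix.unitaryGroup (Fin n × Fin m) ℂ)
    (E : Fin n → ℝ)
    (hE : ∀ i, E i = ((HSt * channel U (gibbs β HB) (outer (e i))).trace).re)
    (Zt : ℝ) (hZt : Zt = ∑ i, Real.exp (-(β * E i)))
    (p : Fin n → ℝ) (hp : ∀ i, p i = Real.exp (-(β * E i)) / Zt)
    (Θ : Matrix (Fin n × Fin m) (Fin n × Fin m) ℂ)
    (hΘ : Θ = ∑ i, (p i : ℂ) • (U * (outer (e i) ⊗ₖ gibbs β HB) * Uᴴ))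
    (lam : Fin n → Fin m → ℝ)
    (hlam : ∀ i j, lam i j = p i * Real.exp (-(β * q j)) / Zpart β HB)
    (Qg : ℝ)
    (hQg : Qg = ((HB * gibbs β HB).trace).re
      - ((((1 : Matrix (Fin n) (Fin n) ℂ) ⊗ₖ HB) * Θ).trace).re)
    (Wg : Fin n → ℝ) (hWg : ∀ i, Wg i = (E i - ε i) - Qg)
    (D : ℝ)
    (hD : D = (∑ i, ∑ j, lam i j * Real.log (lam i j))
      + β * (((HSt ⊗ₖ (1 : Matrix (Fin m) (Fin m) ℂ)) * Θ).trace).re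
      + β * ((((1 : Matrix (Fin n) (Fin n) ℂ) ⊗ₖ HB) * Θ).trace).re
      + Real.log (Zpart β HSt * Zpart β HB))
    (P : Fin n → Fin m → Fin n → Fin m → ℝ)
    (hP : ∀ i j k l, P i j k l = (Real.exp (-(β * ε i)) / Zpart β HS0)
      * (Real.exp (-(β * q j)) / Zpart β HB)
      * (‖∑ x, (starRingEnd ℂ) (e' k x.1 * f l x.2)
          * (U *ᵥ fun y : Fin n × Fin m => e i y.1 * f j y.2) x‖) ^ 2)
    (Wv : Fin n → Fin m → Fin n → Fin m → ℝ)
    (hWv : ∀ i j k l, Wv i j k l = (ε' k + q l) - (ε i + q j)) :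
    ∑ i, (Real.exp (-(β * ε i)) / Zpart β HS0) * Real.exp (-(β * Wg i))
      = (∑ i, ∑ j, ∑ k, ∑ l, P i j k l * Real.exp (-(β * Wv i j k l)))
        * Real.exp (-D) := by
  -- notation
  have hUl : Uᴴ * U = 1 := by
    have := hU.1
    rwa [Matrix.star_eq_conjTranspose] at this
  -- partition function values
  have hZB : Zpart β HB = ∑ j, Real.exp (-(β * q j)) := Zpart_eq β HB f q hf hfeig
  have hZSt : Zpart β HSt = ∑ k, Real.exp (-(β * ε' k)) := Zpart_eq β HSt e' ε' he' heig'
  have hZBpos : 0 < Zpart β HB := by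
    rw [hZB]
    exact Finset.sum_pos (fun _ _ => Real.exp_pos _) ⟨⟨0, hm⟩, Finset.mem_univ _⟩
  have hZStpos : 0 < Zpart β HSt := by
    rw [hZSt]
    exact Finset.sum_pos (fun _ _ => Real.exp_pos _) ⟨⟨0, hn⟩, Finset.mem_univ _⟩
  have hZtpos : 0 < Zt := by
    rw [hZt]
    exact Finset.sum_pos (fun _ _ => Real.exp_pos _) ⟨⟨0, hn⟩, Finset.mem_univ _⟩
  have hppos : ∀ i, 0 < p i := fun i => by
    rw [hp]; exact div_pos (Real.exp_pos _) hZtpos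
  have hpsum : ∑ i, p i = 1 := by
    simp only [hp]
    rw [← Finset.sum_div, ← hZt, div_self hZtpos.ne']
  set r : Fin m → ℝ := fun j => Real.exp (-(β * q j)) / Zpart β HB with hr
  have hrpos : ∀ j, 0 < r j := fun j => div_pos (Real.exp_pos _) hZBpos
  have hrsum : ∑ j, r j = 1 := by
    rw [hr]
    rw [← Finset.sum_div, ← hZB, div_self hZBpos.ne']
  -- average bath energy
  have hqavg : ((HB * gibbs β HB).trace).re = ∑ j, r j * q j := by
    unfold gibbs
    rw [Matrix.mul_smul, Matrix.trace_smul]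
    have h0 := trace_H_exp β HB f q hf hfeig
    rw [show ((Zpart β HB : ℂ))⁻¹ = ((Zpart β HB)⁻¹ : ℝ) from by push_cast; ring]
    rw [smul_eq_mul, Complex.re_ofReal_mul, h0, Finset.mul_sum]
    refine Finset.sum_congr rfl fun j _ => ?_
    rw [hr]
    field_simp
  -- system energy term
  have hTr1 : (((HSt ⊗ₖ (1 : Matrix (Fin m) (Fin m) ℂ)) * Θ).trace).re = ∑ i, p i * E i := by
    rw [hΘ, Finset.mul_sum]
    rw [Matrix.trace_sum, Complex.re_sum]
    refine Finset.sum_congr rfl fun i _ => ?_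
    rw [Matrix.mul_smul, Matrix.trace_smul, smul_eq_mul, Complex.re_ofReal_mul,
      trace_kron_one, hE i]
    rfl
  -- Jarzynski inner sum
  have hg_onb : ∀ a b : Fin n × Fin m,
      ∑ x, (starRingEnd ℂ) ((U *ᵥ fun z : Fin n × Fin m => e a.1 z.1 * f a.2 z.2) x)
        * ((U *ᵥ fun z : Fin n × Fin m => e b.1 z.1 * f b.2 z.2) x)
        = if a = b then 1 else 0 := by
    intro a b
    rw [mulVec_inner U hUl]
    exact prod_onb e f he hf a b
  have hcomp : ∀ x y : Fin n × Fin m,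
      ∑ a : Fin n × Fin m, (U *ᵥ fun z : Fin n × Fin m => e a.1 z.1 * f a.2 z.2) x
        * (starRingEnd ℂ) ((U *ᵥ fun z : Fin n × Fin m => e a.1 z.1 * f a.2 z.2) y)
        = if x = y then 1 else 0 :=
    onb_complete (fun a => U *ᵥ fun z : Fin n × Fin m => e a.1 z.1 * f a.2 z.2) hg_onb
  have hJsum : ∀ k l, (∑ i, ∑ j, (‖∑ x, (starRingEnd ℂ) (e' k x.1 * f l x.2)
      * (U *ᵥ fun y : Fin n × Fin m => e i y.1 * f j y.2) x‖) ^ 2) = 1 := by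
    intro k l
    have hnorm : ∑ x : Fin n × Fin m,
        (starRingEnd ℂ) (e' k x.1 * f l x.2) * (e' k x.1 * f l x.2) = 1 := by
      have := prod_onb e' f he' hf (k, l) (k, l)
      simpa using this
    have hmain := sum_abs_sq_eq_one _ _ hcomp hnorm
    rw [Fintype.sum_prod_type] at hmain
    simpa using hmain
  -- log sums
  have hlam' : ∀ i j, lam i j = p i * r j := by
    intro i j
    rw [hlam, hr]
    ring
  have hlamsum : (∑ i, ∑ j, lam i j * Real.log (lam i j))
      = (∑ i, p i * Real.log (p i)) + (∑ j, r j * Real.log (r j)) := by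
    have e1 : ∀ i j, lam i j * Real.log (lam i j)
        = r j * (p i * Real.log (p i)) + p i * (r j * Real.log (r j)) := by
      intro i j
      rw [hlam' i j, Real.log_mul (hppos i).ne' (hrpos j).ne']
      ring
    calc (∑ i, ∑ j, lam i j * Real.log (lam i j))
        = ∑ i, ((∑ j, r j) * (p i * Real.log (p i)) + p i * (∑ j, r j * Real.log (r j))) := by
          refine Finset.sum_congr rfl fun i _ => ?_
          rw [Finset.sum_congr rfl fun j _ => e1 i j, Finset.sum_add_distrib,
            ← Finset.sum_mul, ← Finset.mul_sum]
      _ = ∑ i, (p i * Real.log (p i) + p i * (∑ j, r j * Real.log (r j))) := by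
          refine Finset.sum_congr rfl fun i _ => ?_
          rw [hrsum, one_mul]
      _ = _ := by
          rw [Finset.sum_add_distrib, ← Finset.sum_mul, hpsum, one_mul]
  have hplogsum : (∑ i, p i * Real.log (p i)) = -(β * (∑ i, p i * E i)) - Real.log Zt := by
    have e1 : ∀ i, p i * Real.log (p i) = -(β * (p i * E i)) - p i * Real.log Zt := by
      intro i
      rw [hp i, Real.log_div (Real.exp_ne_zero _) hZtpos.ne', Real.log_exp, ← hp i]
      ring
    rw [Finset.sum_congr rfl fun i _ => e1 i, Finset.sum_sub_distrib, ← Finset.sum_mul,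
      hpsum, one_mul]
    congr 1
    rw [Finset.sum_neg_distrib, ← Finset.mul_sum]
  have hrlogsum : (∑ j, r j * Real.log (r j))
      = -(β * (∑ j, r j * q j)) - Real.log (Zpart β HB) := by
    have e1 : ∀ j, r j * Real.log (r j) = -(β * (r j * q j)) - r j * Real.log (Zpart β HB) := by
      intro j
      have hlogr : Real.log (r j) = -(β * q j) - Real.log (Zpart β HB) := by
        show Real.log (Real.exp (-(β * q j)) / Zpart β HB) = _
        rw [Real.log_div (Real.exp_ne_zero _) hZBpos.ne', Real.log_exp]
      rw [hlogr]
      ring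
    rw [Finset.sum_congr rfl fun j _ => e1 j, Finset.sum_sub_distrib, ← Finset.sum_mul,
      hrsum, one_mul]
    congr 1
    rw [Finset.sum_neg_distrib, ← Finset.mul_sum]
  -- D in closed form
  have hD2 : D = Real.log (Zpart β HSt) - Real.log Zt - β * Qg := by
    rw [hD, hlamsum, hplogsum, hrlogsum, hTr1,
      Real.log_mul hZStpos.ne' hZBpos.ne', hQg, hqavg]
    ring
  -- LHS
  have hLHS : (∑ i, (Real.exp (-(β * ε i)) / Zpart β HS0) * Real.exp (-(β * Wg i)))
      = Zt * Real.exp (β * Qg) / Zpart β HS0 := by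
    have e1 : ∀ i, (Real.exp (-(β * ε i)) / Zpart β HS0) * Real.exp (-(β * Wg i))
        = (Real.exp (-(β * E i)) * Real.exp (β * Qg)) / Zpart β HS0 := by
      intro i
      rw [hWg i, div_mul_eq_mul_div, ← Real.exp_add,
        show -(β * ε i) + -(β * (E i - ε i - Qg)) = -(β * E i) + β * Qg by ring,
        Real.exp_add]
    rw [Finset.sum_congr rfl fun i _ => e1 i, ← Finset.sum_div, ← Finset.sum_mul, ← hZt]
  -- RHS double sum
  have hterm : ∀ i j k l, P i j k l * Real.exp (-(β * Wv i j k l))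
      = (Real.exp (-(β * ε' k)) * Real.exp (-(β * q l)) / (Zpart β HS0 * Zpart β HB))
        * (‖∑ x, (starRingEnd ℂ) (e' k x.1 * f l x.2)
          * (U *ᵥ fun y : Fin n × Fin m => e i y.1 * f j y.2) x‖) ^ 2 := by
    intro i j k l
    rw [hP i j k l, hWv i j k l]
    have hcomb : Real.exp (-(β * ε i)) * Real.exp (-(β * q j))
        * Real.exp (-(β * ((ε' k + q l) - (ε i + q j))))
        = Real.exp (-(β * ε' k)) * Real.exp (-(β * q l)) := by
      rw [← Real.exp_add, ← Real.exp_add, ← Real.exp_add]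
      congr 1
      ring
    rw [← hcomb]
    ring
  have hRsum : (∑ i, ∑ j, ∑ k, ∑ l, P i j k l * Real.exp (-(β * Wv i j k l)))
      = Zpart β HSt / Zpart β HS0 := by
    calc (∑ i, ∑ j, ∑ k, ∑ l, P i j k l * Real.exp (-(β * Wv i j k l)))
        = ∑ i, ∑ j, ∑ k, ∑ l,
          (Real.exp (-(β * ε' k)) * Real.exp (-(β * q l)) / (Zpart β HS0 * Zpart β HB))
          * (‖∑ x, (starRingEnd ℂ) (e' k x.1 * f l x.2)
            * (U *ᵥ fun y : Fin n × Fin m => e i y.1 * f j y.2) x‖) ^ 2 :=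
          Finset.sum_congr rfl fun i _ => Finset.sum_congr rfl fun j _ =>
            Finset.sum_congr rfl fun k _ => Finset.sum_congr rfl fun l _ => hterm i j k l
      _ = ∑ k, ∑ l, ∑ i, ∑ j,
          (Real.exp (-(β * ε' k)) * Real.exp (-(β * q l)) / (Zpart β HS0 * Zpart β HB))
          * (‖∑ x, (starRingEnd ℂ) (e' k x.1 * f l x.2)
            * (U *ᵥ fun y : Fin n × Fin m => e i y.1 * f j y.2) x‖) ^ 2 :=
          sum4_comm _
      _ = ∑ k, ∑ l,
          Real.exp (-(β * ε' k)) * Real.exp (-(β * q l)) / (Zpart β HS0 * Zpart β HB) := by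
          refine Finset.sum_congr rfl fun k _ => Finset.sum_congr rfl fun l _ => ?_
          simp only [← Finset.mul_sum]
          rw [hJsum k l, mul_one]
      _ = (∑ k, Real.exp (-(β * ε' k))) * (∑ l, Real.exp (-(β * q l)))
          / (Zpart β HS0 * Zpart β HB) := by
          rw [Finset.sum_mul_sum, Finset.sum_div]
          exact Finset.sum_congr rfl fun k _ => by rw [Finset.sum_div]
      _ = Zpart β HSt / Zpart β HS0 := by
          rw [← hZSt, ← hZB, mul_div_mul_right _ _ hZBpos.ne']
  rw [hLHS, hRsum, hD2]
  rw [show -(Real.log (Zpart β HSt) - Real.log Zt - β * Qg)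
      = Real.log Zt + β * Qg - Real.log (Zpart β HSt) by ring]
  rw [Real.exp_sub, Real.exp_add, Real.exp_log hZtpos, Real.exp_log hZStpos]
  field_simp
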